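/- For t > 0 define c_t = cosh(πt/4) + cosh(3πt/4) − coth(πt)·(sinh(πt/4) + sinh(3πt/4)). Then for every t > 0, the derivative of t ↦ c_t equals −(π/4)·sinh(πt/4)·(cosh(πt/2) + 2)/cosh²(πt/2). -/

import Mathlib

open Real Filter Set Topology

/-- `c t = cosh(πt/4) + cosh(3πt/4) − coth(πt)·(sinh(πt/4) + sinh(3πt/4))`. -/
noncomputable def c (t : ℝ) : ℝ :=
  Real.cosh (π * t / 4) + Real.cosh (3 * π * t / 4) -
    (Real.cosh (π * t) / Real.sinh (π * t)) * (Real.sinh (π * t / 4) + Real.sinh (3 * π * t / 4))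

/-! With `x = πt/4`, sum-to-product gives `c t = 2 cosh x · (cosh 2x − coth 4x · sinh 2x)`, and
`coth 4x · sinh 2x = cosh 4x / (2 cosh 2x) = cosh 2x − 1 / (2 cosh 2x)`, so `c t = cosh x / cosh 2x`
away from `t = 0`. Differentiating this quotient and using `2 cosh x sinh 2x = 2 (cosh 2x + 1) sinh x`
gives the formula. -/

namespace Real

theorem cosh_add_cosh_three_mul (x : ℝ) : cosh x + cosh (3 * x) = 2 * cosh (2 * x) * cosh x := by
  have hsub := cosh_sub (2 * x) x
  have hadd := cosh_add (2 * x) x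
  rw [show 2 * x - x = x by ring] at hsub
  rw [show 2 * x + x = 3 * x by ring] at hadd
  linarith

theorem sinh_add_sinh_three_mul (x : ℝ) : sinh x + sinh (3 * x) = 2 * sinh (2 * x) * cosh x := by
  have hsub := sinh_sub (2 * x) x
  have hadd := sinh_add (2 * x) x
  rw [show 2 * x - x = x by ring] at hsub
  rw [show 2 * x + x = 3 * x by ring] at hadd
  linarith

theorem cosh_add_cosh_three_mul_sub_coth_mul {x : ℝ} (hx : x ≠ 0) :
    cosh x + cosh (3 * x) - cosh (4 * x) / sinh (4 * x) * (sinh x + sinh (3 * x)) =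
      cosh x / cosh (2 * x) := by
  have hsinh : sinh (2 * x) ≠ 0 := by simpa using hx
  have hcosh : cosh (2 * x) ≠ 0 := (cosh_pos _).ne'
  have hsinh₄ : sinh (4 * x) = 2 * sinh (2 * x) * cosh (2 * x) := by
    rw [show 4 * x = 2 * (2 * x) by ring, sinh_two_mul]
  have hcosh₄ : cosh (4 * x) = 2 * cosh (2 * x) ^ 2 - 1 := by
    rw [show 4 * x = 2 * (2 * x) by ring, cosh_two_mul, ← cosh_sq_sub_sinh_sq (2 * x)]
    ring
  rw [cosh_add_cosh_three_mul, sinh_add_sinh_three_mul, hsinh₄, hcosh₄]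
  field_simp
  ring

theorem hasDerivAt_cosh_div_cosh_two_mul (x : ℝ) :
    HasDerivAt (fun y => cosh y / cosh (2 * y))
      (-sinh x * (cosh (2 * x) + 2) / cosh (2 * x) ^ 2) x := by
  have hden : HasDerivAt (fun y => cosh (2 * y)) (sinh (2 * x) * 2) x := by
    simpa using ((hasDerivAt_id x).const_mul 2).cosh
  refine ((hasDerivAt_cosh x).div hden (cosh_pos _).ne').congr_deriv ?_
  rw [sinh_two_mul, cosh_two_mul]
  congr 1
  linear_combination (-2 * sinh x) * cosh_sq_sub_sinh_sq x

end Real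

theorem c_eq_cosh_div_cosh {t : ℝ} (ht : t ≠ 0) :
    c t = cosh (π * t / 4) / cosh (2 * (π * t / 4)) := by
  have hx : π * t / 4 ≠ 0 := by positivity
  rw [← cosh_add_cosh_three_mul_sub_coth_mul hx, c]
  ring_nf

theorem stmt7 :
    ∀ t : ℝ, 0 < t →
      deriv c t = -(π / 4) * Real.sinh (π * t / 4) * (Real.cosh (π * t / 2) + 2) /
        (Real.cosh (π * t / 2)) ^ 2 := by
  intro t ht
  have hc : c =ᶠ[𝓝 t] fun s => cosh (π * s / 4) / cosh (2 * (π * s / 4)) := by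
    filter_upwards [Ioi_mem_nhds ht] with s hs
    exact c_eq_cosh_div_cosh hs.ne'
  have hlin : HasDerivAt (fun s => π * s / 4) (π / 4) t := by
    simpa using ((hasDerivAt_id t).const_mul π).div_const 4
  rw [hc.deriv_eq]
  refine ((hasDerivAt_cosh_div_cosh_two_mul _).comp t hlin).deriv.trans ?_
  rw [show 2 * (π * t / 4) = π * t / 2 by ring]
  ring
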